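/- With the same constants M, ε₀, ε and the iteration q₀ ≡ 1, q_{n+1}(z)² = −2∫₀¹ t q_n(zt) dt + 2 − 2z + z²/2 (positive square root) as above, for all n ≥ 0 and 0 ≤ z ≤ ε one has |q_{n+1}(z) − q_n(z)| ≤ M γⁿ z, where γ = 1/(3(1 − Mε)) < 1. -/

import Mathlib

/-!
The square-root map contracts near `1`: `|√a - √b| = |a - b| / (√a + √b)`, and the a-priori bound
`|q_n(z) - 1| ≤ M z` keeps `√a + √b ≥ 2 (1 - M ε)`. On the other side, a perturbation of size
`c w` in `q_n` changes `q_{n+1}²` by at most `2 ∫₀¹ t · c z t dt = 2 c z / 3`. Together they turn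
`|q_n - q_{n-1}| ≤ c w` into `|q_{n+1} - q_n| ≤ c / (3 (1 - M ε)) · z`, and induction does the rest.
-/

open Set intervalIntegral MeasureTheory

lemma abs_sqrt_sub_one_le_abs_sub_one {a : ℝ} (ha : 0 ≤ a) : |√a - 1| ≤ |a - 1| := by
  have hsq : (√a - 1) * (√a + 1) = a - 1 := by
    linear_combination Real.sq_sqrt ha
  calc |√a - 1| ≤ |√a - 1| * |√a + 1| := by
        refine le_mul_of_one_le_right (abs_nonneg _) ?_
        rw [abs_of_nonneg (by positivity)]
        linarith [Real.sqrt_nonneg a]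
    _ = |a - 1| := by rw [← abs_mul, hsq]

lemma abs_sqrt_sub_sqrt_le_div {a b c : ℝ} (ha : 0 ≤ a) (hb : 0 ≤ b) (hc : 0 < c)
    (hsum : c ≤ √a + √b) : |√a - √b| ≤ |a - b| / c := by
  have hsq : (√a - √b) * (√a + √b) = a - b := by
    linear_combination Real.sq_sqrt ha - Real.sq_sqrt hb
  rw [le_div_iff₀ hc]
  calc |√a - √b| * c ≤ |√a - √b| * |√a + √b| :=
        mul_le_mul_of_nonneg_left (hsum.trans (le_abs_self _)) (abs_nonneg _)
    _ = |a - b| := by rw [← abs_mul, hsq]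

lemma abs_integral_mul_le_div_three {f : ℝ → ℝ} {c : ℝ}
    (hf : ∀ t ∈ Icc (0 : ℝ) 1, |f t| ≤ c * t) :
    |∫ t in (0 : ℝ)..1, t * f t| ≤ c / 3 := by
  have hbound : ∀ᵐ t, t ∈ Ioc (0 : ℝ) 1 → ‖t * f t‖ ≤ c * t ^ 2 := by
    refine Filter.Eventually.of_forall fun t ht => ?_
    have ht0 : 0 ≤ t := ht.1.le
    rw [Real.norm_eq_abs, abs_mul, abs_of_nonneg ht0]
    nlinarith [hf t (Ioc_subset_Icc_self ht)]
  have hint : ∫ t in (0 : ℝ)..1, c * t ^ 2 = c / 3 := by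
    rw [intervalIntegral.integral_const_mul, integral_pow]
    ring
  simpa [hint] using norm_integral_le_of_norm_le zero_le_one hbound
    ((continuous_const.mul (continuous_pow 2)).intervalIntegrable 0 1)

/-- The right-hand side of the recursion `q_{n+1}(z)² = squaredStep q_n z`. -/
noncomputable def squaredStep (f : ℝ → ℝ) (z : ℝ) : ℝ :=
  -2 * (∫ t in (0 : ℝ)..1, t * f (z * t)) + 2 - 2 * z + z ^ 2 / 2

lemma squaredStep_one (z : ℝ) : squaredStep (fun _ => 1) z = 1 - 2 * z + z ^ 2 / 2 := by
  simp only [squaredStep, mul_one, integral_id]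
  ring

section bounds

variable {ε z : ℝ} {f g : ℝ → ℝ}

lemma mul_mem_Icc_of_mem_Icc (hz : z ∈ Icc (0 : ℝ) ε) {t : ℝ} (ht : t ∈ Icc (0 : ℝ) 1) :
    z * t ∈ Icc (0 : ℝ) ε :=
  ⟨mul_nonneg hz.1 ht.1, (mul_le_of_le_one_right hz.1 ht.2).trans hz.2⟩

lemma intervalIntegrable_mul_comp_mul (hf : ContinuousOn f (Icc 0 ε)) (hz : z ∈ Icc (0 : ℝ) ε) :
    IntervalIntegrable (fun t => t * f (z * t)) volume 0 1 := by
  refine ContinuousOn.intervalIntegrable ?_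
  rw [uIcc_of_le zero_le_one]
  exact continuousOn_id.mul (hf.comp (continuous_const_mul z).continuousOn
    fun _ ht => mul_mem_Icc_of_mem_Icc hz ht)

lemma abs_squaredStep_sub_le {c : ℝ} (hf : ContinuousOn f (Icc 0 ε))
    (hg : ContinuousOn g (Icc 0 ε)) (hfg : ∀ w ∈ Icc (0 : ℝ) ε, |f w - g w| ≤ c * w)
    (hz : z ∈ Icc (0 : ℝ) ε) :
    |squaredStep f z - squaredStep g z| ≤ 2 * c * z / 3 := by
  have hdiff : squaredStep f z - squaredStep g z
      = -2 * ∫ t in (0 : ℝ)..1, t * (f (z * t) - g (z * t)) := by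
    simp only [squaredStep, mul_sub, integral_sub (intervalIntegrable_mul_comp_mul hf hz)
      (intervalIntegrable_mul_comp_mul hg hz)]
    ring
  have hint : |∫ t in (0 : ℝ)..1, t * (f (z * t) - g (z * t))| ≤ c * z / 3 :=
    abs_integral_mul_le_div_three fun t ht => by
      simpa [mul_assoc] using hfg _ (mul_mem_Icc_of_mem_Icc hz ht)
  rw [hdiff, abs_mul, abs_neg, abs_two]
  linarith

variable {M : ℝ}

lemma abs_squaredStep_sub_one_le (hM : 2 * M / 3 + 2 + ε / 2 ≤ M)
    (hf : ContinuousOn f (Icc 0 ε)) (hf1 : ∀ w ∈ Icc (0 : ℝ) ε, |f w - 1| ≤ M * w)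
    (hz : z ∈ Icc (0 : ℝ) ε) :
    |squaredStep f z - 1| ≤ M * z := by
  have hstep := abs_squaredStep_sub_le hf continuousOn_const hf1 hz
  rw [squaredStep_one] at hstep
  have hz2 : z ^ 2 ≤ ε * z := by nlinarith [hz.1, hz.2]
  have hMz := mul_le_mul_of_nonneg_right hM hz.1
  rw [abs_le] at hstep ⊢
  constructor <;> nlinarith [hz.1]

lemma squaredStep_nonneg (hM : 2 * M / 3 + 2 + ε / 2 ≤ M) (hMε : M * ε ≤ 1)
    (hf : ContinuousOn f (Icc 0 ε)) (hf1 : ∀ w ∈ Icc (0 : ℝ) ε, |f w - 1| ≤ M * w)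
    (hz : z ∈ Icc (0 : ℝ) ε) :
    0 ≤ squaredStep f z := by
  have hMz : M * z ≤ M * ε :=
    mul_le_mul_of_nonneg_left hz.2 (by linarith [hz.1.trans hz.2])
  linarith [(abs_le.1 (abs_squaredStep_sub_one_le hM hf hf1 hz)).1]

lemma abs_sqrt_squaredStep_sub_one_le (hM : 2 * M / 3 + 2 + ε / 2 ≤ M) (hMε : M * ε ≤ 1)
    (hf : ContinuousOn f (Icc 0 ε)) (hf1 : ∀ w ∈ Icc (0 : ℝ) ε, |f w - 1| ≤ M * w)
    (hz : z ∈ Icc (0 : ℝ) ε) :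
    |√(squaredStep f z) - 1| ≤ M * z :=
  (abs_sqrt_sub_one_le_abs_sub_one (squaredStep_nonneg hM hMε hf hf1 hz)).trans
    (abs_squaredStep_sub_one_le hM hf hf1 hz)

lemma abs_sqrt_squaredStep_sub_le {c : ℝ} (hM : 2 * M / 3 + 2 + ε / 2 ≤ M) (hMε : M * ε < 1)
    (hf : ContinuousOn f (Icc 0 ε)) (hf1 : ∀ w ∈ Icc (0 : ℝ) ε, |f w - 1| ≤ M * w)
    (hg : ContinuousOn g (Icc 0 ε)) (hg1 : ∀ w ∈ Icc (0 : ℝ) ε, |g w - 1| ≤ M * w)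
    (hfg : ∀ w ∈ Icc (0 : ℝ) ε, |f w - g w| ≤ c * w) (hz : z ∈ Icc (0 : ℝ) ε) :
    |√(squaredStep f z) - √(squaredStep g z)| ≤ c / (3 * (1 - M * ε)) * z := by
  have hMz : M * z ≤ M * ε :=
    mul_le_mul_of_nonneg_left hz.2 (by linarith [hz.1.trans hz.2])
  have hsum : 2 * (1 - M * ε) ≤ √(squaredStep f z) + √(squaredStep g z) := by
    have hf' := (abs_le.1 (abs_sqrt_squaredStep_sub_one_le hM hMε.le hf hf1 hz)).1
    have hg' := (abs_le.1 (abs_sqrt_squaredStep_sub_one_le hM hMε.le hg hg1 hz)).1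
    linarith
  calc |√(squaredStep f z) - √(squaredStep g z)|
      ≤ |squaredStep f z - squaredStep g z| / (2 * (1 - M * ε)) :=
        abs_sqrt_sub_sqrt_le_div (squaredStep_nonneg hM hMε.le hf hf1 hz)
          (squaredStep_nonneg hM hMε.le hg hg1 hz) (by linarith) hsum
    _ ≤ 2 * c * z / 3 / (2 * (1 - M * ε)) :=
        div_le_div_of_nonneg_right (abs_squaredStep_sub_le hf hg hfg hz) (by linarith)
    _ = c / (3 * (1 - M * ε)) * z := by
        field_simp

end bounds

theorem stmt_7_general (M ε₀ ε : ℝ) (hM : 0 < M) (hε₀ : 0 < ε₀)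
    (h1 : M * ε₀ < 2 / 3)
    (h3 : (1 + M * ε₀) * (2 * M / 3 + 2 + ε₀ / 2) ≤ M)
    (hε : ε = min (1 / 4) ε₀)
    (q : ℕ → ℝ → ℝ)
    (hq0 : ∀ z, q 0 z = 1)
    (hqrec : ∀ n : ℕ, ∀ z ∈ Icc (0 : ℝ) ε,
      q (n + 1) z =
        Real.sqrt (-2 * (∫ t in (0 : ℝ)..1, t * q n (z * t)) + 2 - 2 * z + z ^ 2 / 2))
    (hqcont : ∀ n, ContinuousOn (q n) (Icc (0 : ℝ) ε)) :
    (1 / (3 * (1 - M * ε)) < 1) ∧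
    ∀ n : ℕ, ∀ z ∈ Icc (0 : ℝ) ε,
      |q (n + 1) z - q n z| ≤ M * (1 / (3 * (1 - M * ε))) ^ n * z := by
  have hεε₀ : ε ≤ ε₀ := hε ▸ min_le_right _ _
  have hMε : M * ε < 2 / 3 := (mul_le_mul_of_nonneg_left hεε₀ hM.le).trans_lt h1
  have hkey : 2 * M / 3 + 2 + ε / 2 ≤ M := by
    nlinarith [mul_nonneg (mul_nonneg hM.le hε₀.le) (by positivity : 0 ≤ 2 * M / 3 + 2 + ε₀ / 2)]
  have hq1 : ∀ n, ∀ z ∈ Icc (0 : ℝ) ε, |q n z - 1| ≤ M * z := by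
    intro n
    induction n with
    | zero => intro z hz; simpa [hq0] using mul_nonneg hM.le hz.1
    | succ n ih =>
      intro z hz
      rw [hqrec n z hz]
      exact abs_sqrt_squaredStep_sub_one_le hkey (by linarith) (hqcont n) ih hz
  refine ⟨by rw [div_lt_one (by linarith)]; linarith, fun n => ?_⟩
  induction n with
  | zero => intro z hz; simpa [hq0] using hq1 1 z hz
  | succ n ih =>
    intro z hz
    rw [hqrec (n + 1) z hz, hqrec n z hz]
    refine (abs_sqrt_squaredStep_sub_le hkey (by linarith) (hqcont (n + 1)) (hq1 (n + 1))
      (hqcont n) (hq1 n) ih hz).trans_eq ?_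
    ring

theorem stmt_7 (M ε₀ ε : ℝ) (hM : 0 < M) (hε₀ : 0 < ε₀)
    (h1 : M * ε₀ < 2 / 3)
    (h2 : (2 + ε₀ / 2) * (1 + M * ε₀) ≤ M)
    (h3 : (1 + M * ε₀) * (2 * M / 3 + 2 + ε₀ / 2) ≤ M)
    (hε : ε = min (1 / 4) ε₀)
    (q : ℕ → ℝ → ℝ)
    (hq0 : ∀ z, q 0 z = 1)
    (hqrec : ∀ n : ℕ, ∀ z ∈ Icc (0 : ℝ) ε,
      q (n + 1) z =
        Real.sqrt (-2 * (∫ t in (0 : ℝ)..1, t * q n (z * t)) + 2 - 2 * z + z ^ 2 / 2))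
    (hqcont : ∀ n, ContinuousOn (q n) (Icc (0 : ℝ) ε)) :
    (1 / (3 * (1 - M * ε)) < 1) ∧
    ∀ n : ℕ, ∀ z ∈ Icc (0 : ℝ) ε,
      |q (n + 1) z - q n z| ≤ M * (1 / (3 * (1 - M * ε))) ^ n * z :=
  stmt_7_general M ε₀ ε hM hε₀ h1 h3 hε q hq0 hqrec hqcont
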